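/- Greedy set cover approximation bound: for a finite set L with |L| = n ≥ 1 covered by a finite collection C of subsets, the greedy algorithm (repeatedly choosing the set covering the most uncovered elements) selects at most OPT · (1 + ln n) sets, where OPT is the size of a minimum set cover. -/
import Mathlib

theorem stmt_15 {α : Type*} [DecidableEq α]
    (L : Finset α) (C : Finset (Finset α)) (OPT t : ℕ) (sel : ℕ → Finset α)
    (hn : 1 ≤ L.card)
    (hcover : C.sup id = L)
    (hOPT : IsLeast {k | ∃ D ⊆ C, D.sup id = L ∧ D.card = k} OPT)
    (hsel : ∀ k, sel k ∈ C)
    (hgreedy : ∀ k, ∀ X ∈ C,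
      (X \ (Finset.range k).sup sel).card ≤ (sel k \ (Finset.range k).sup sel).card)
    (hstop : (Finset.range t).sup sel = L)
    (hrun : ∀ k < t, (Finset.range k).sup sel ≠ L) :
    (t : ℝ) ≤ (OPT : ℝ) * (1 + Real.log L.card) := by
  obtain ⟨D, hDC, hDsup, hDcard⟩ := hOPT.1
  -- OPT ≥ 1
  have hOPT1 : 1 ≤ OPT := by
    rw [← hDcard, Nat.one_le_iff_ne_zero, Ne, Finset.card_eq_zero]
    rintro rfl
    simp at hDsup
    rw [← hDsup] at hn
    simp at hn
  have hOPTR : (1:ℝ) ≤ OPT := by exact_mod_cast hOPT1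
  have hOPTpos : (0:ℝ) < OPT := lt_of_lt_of_le one_pos hOPTR
  set S : ℕ → Finset α := fun k => (Finset.range k).sup sel with hS
  have hSL : ∀ k, S k ⊆ L := by
    intro k
    show S k ≤ L
    apply Finset.sup_le
    intro j _
    rw [← hcover]
    exact Finset.le_sup (f := id) (hsel j)
  have hSsucc : ∀ k, S (k + 1) = S k ∪ sel k := by
    intro k
    show (Finset.range (k+1)).sup sel = S k ∪ sel k
    rw [Finset.range_add_one, Finset.sup_insert]
    exact sup_comm _ _
  -- covering inequality
  have hkey : ∀ k, (L \ S k).card ≤ OPT * (sel k \ S k).card := by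
    intro k
    have hsub : L \ S k ⊆ D.biUnion (fun X => X \ S k) := by
      intro x hx
      rw [Finset.mem_sdiff] at hx
      rw [← hDsup] at hx
      obtain ⟨X, hXD, hxX⟩ := Finset.mem_sup.mp hx.1
      exact Finset.mem_biUnion.mpr ⟨X, hXD, Finset.mem_sdiff.mpr ⟨hxX, hx.2⟩⟩
    calc (L \ S k).card ≤ (D.biUnion (fun X => X \ S k)).card := Finset.card_le_card hsub
      _ ≤ ∑ X ∈ D, (X \ S k).card := Finset.card_biUnion_le
      _ ≤ ∑ _X ∈ D, (sel k \ S k).card := Finset.sum_le_sum (fun X hX => hgreedy k X (hDC hX))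
      _ = OPT * (sel k \ S k).card := by rw [Finset.sum_const, hDcard, smul_eq_mul]
  -- cardinal recurrence
  have hrec : ∀ k, (L \ S (k+1)).card + (sel k \ S k).card = (L \ S k).card := by
    intro k
    have h1 : L \ S (k+1) = (L \ S k) \ (sel k \ S k) := by
      rw [hSsucc]
      ext x
      simp only [Finset.mem_sdiff, Finset.mem_union]
      tauto
    have h2 : sel k \ S k ⊆ L \ S k := by
      intro x hx
      rw [Finset.mem_sdiff] at hx ⊢
      refine ⟨?_, hx.2⟩
      have : sel k ⊆ L := by rw [← hcover]; exact Finset.le_sup (f := id) (hsel k)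
      exact this hx.1
    rw [h1, Finset.card_sdiff_add_card_eq_card h2]
  set f : ℕ → ℝ := fun k => ((L \ S k).card : ℝ) with hf
  have hfnonneg : ∀ k, 0 ≤ f k := fun k => Nat.cast_nonneg _
  have hstep : ∀ k, f (k+1) ≤ (1 - 1/OPT) * f k := by
    intro k
    have h1 : (OPT : ℝ) * f (k+1) ≤ (OPT - 1) * f k := by
      have hk : ((L \ S k).card : ℝ) ≤ OPT * ((sel k \ S k).card : ℝ) := by
        exact_mod_cast hkey k
      have hr : ((L \ S (k+1)).card : ℝ) + ((sel k \ S k).card : ℝ) = ((L \ S k).card : ℝ) := by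
        exact_mod_cast hrec k
      simp only [hf]
      nlinarith
    have h2 : (1 - 1/(OPT:ℝ)) * f k = ((OPT:ℝ) - 1) * f k / OPT := by
      field_simp
    rw [h2, le_div_iff₀ hOPTpos]
    nlinarith
  have hbound : ∀ k, f k ≤ (L.card : ℝ) * (1 - 1/OPT)^k := by
    intro k
    induction k with
    | zero => simp [hf, hS]
    | succ k ih =>
      have h0 : (0:ℝ) ≤ 1 - 1/OPT := by
        rw [sub_nonneg, div_le_one hOPTpos]; exact hOPTR
      calc f (k+1) ≤ (1 - 1/OPT) * f k := hstep k
        _ ≤ (1 - 1/OPT) * ((L.card : ℝ) * (1 - 1/OPT)^k) := by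
            exact mul_le_mul_of_nonneg_left ih h0
        _ = (L.card : ℝ) * (1 - 1/OPT)^(k+1) := by ring
  have hlogn : 0 ≤ Real.log L.card := Real.log_nonneg (by exact_mod_cast hn)
  rcases Nat.eq_zero_or_pos t with rfl | ht
  · simp
    positivity
  -- t ≥ 1 : f (t-1) ≥ 1
  have hft : 1 ≤ f (t - 1) := by
    have hne : S (t-1) ≠ L := hrun (t-1) (Nat.sub_lt ht one_pos)
    have : (L \ S (t-1)).Nonempty := by
      rw [Finset.sdiff_nonempty]
      intro h
      exact hne (Finset.Subset.antisymm (hSL _) h)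
    have h := Finset.card_pos.mpr this
    show (1:ℝ) ≤ ((L \ S (t-1)).card : ℝ)
    exact_mod_cast h
  have hexp : (1 - 1/(OPT:ℝ))^(t-1) ≤ Real.exp (-(((t-1:ℕ):ℝ)/OPT)) := by
    have h1 : (1:ℝ) - 1/OPT ≤ Real.exp (-(1/OPT)) := by
      have := Real.add_one_le_exp (-(1/(OPT:ℝ)))
      linarith
    have h0 : (0:ℝ) ≤ 1 - 1/OPT := by
      rw [sub_nonneg, div_le_one hOPTpos]; exact hOPTR
    calc (1 - 1/(OPT:ℝ))^(t-1) ≤ (Real.exp (-(1/OPT)))^(t-1) := pow_le_pow_left₀ h0 h1 _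
      _ = Real.exp (-(((t-1:ℕ):ℝ)/OPT)) := by
          rw [← Real.exp_nat_mul]
          ring_nf
  have hchain : (1:ℝ) ≤ (L.card : ℝ) * Real.exp (-(((t-1:ℕ):ℝ)/OPT)) := by
    calc (1:ℝ) ≤ f (t-1) := hft
      _ ≤ (L.card : ℝ) * (1 - 1/OPT)^(t-1) := hbound _
      _ ≤ (L.card : ℝ) * Real.exp (-(((t-1:ℕ):ℝ)/OPT)) := by
          apply mul_le_mul_of_nonneg_left hexp (by positivity)
  have hlog : ((t-1:ℕ):ℝ)/OPT ≤ Real.log L.card := by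
    set x : ℝ := ((t-1:ℕ):ℝ)/OPT with hx
    have hexp_le : Real.exp x ≤ L.card := by
      have hme := mul_le_mul_of_nonneg_left hchain (Real.exp_pos x).le
      rw [mul_one] at hme
      calc Real.exp x ≤ Real.exp x * ((L.card:ℝ) * Real.exp (-x)) := hme
        _ = (L.card:ℝ) * (Real.exp x * Real.exp (-x)) := by ring
        _ = (L.card:ℝ) := by rw [← Real.exp_add]; simp
    rw [← Real.le_log_iff_exp_le (by exact_mod_cast hn : (0:ℝ) < L.card)] at hexp_le
    exact hexp_le
  have htc : ((t-1:ℕ):ℝ) = (t:ℝ) - 1 := by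
    have : (t:ℝ) - 1 = ((t:ℕ):ℝ) - 1 := rfl
    rw [Nat.cast_sub ht]; simp
  rw [htc] at hlog
  rw [div_le_iff₀ hOPTpos] at hlog
  nlinarith
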